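/- Let k ≥ 1 and l be integers with 2 ≤ l ≤ k+1. Then R^l_k = {e_i − e_j : 1 ≤ i, j ≤ l, i ≠ j}; in particular R^l_k is a root system of type A_{l−1} and has exactly l(l−1) elements, and its ℚ-linear span has dimension l−1 (a hyperplane in the orthogonal complement of ω'). -/
import Mathlib


/-- The standard basis vector `e_n` of `ℤ^{l+1}` (for `n ≤ l`). -/
def unitVec (l n : ℕ) : Fin (l + 1) → ℤ :=
  fun i => if (i : ℕ) = n then 1 else 0

/-- The symmetric bilinear form on `ℤ^{l+1}` with `B(e₀,e₀) = k`, `B(eᵢ,eᵢ) = -1` for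
`1 ≤ i ≤ l`, and `B(eᵢ,eⱼ) = 0` for `i ≠ j`. -/
def bformZ (k l : ℕ) (v w : Fin (l + 1) → ℤ) : ℤ :=
  ((k : ℤ) + 1) * (v 0 * w 0) - ∑ i, v i * w i

/-- The vector `ω' = -(k+2)·e₀ + k·(e₁ + ⋯ + e_l)`. -/
def omegaZ (k l : ℕ) : Fin (l + 1) → ℤ :=
  fun i => if i = 0 then -((k : ℤ) + 2) else (k : ℤ)

/-- The root system `R^l_k = {v ∈ ℤ^{l+1} : B(v,v) = -2, B(v,ω') = 0}`. -/
def rootSet (k l : ℕ) : Set (Fin (l + 1) → ℤ) :=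
  {v | bformZ k l v v = -2 ∧ bformZ k l v (omegaZ k l) = 0}

/-- The image of `R^l_k` inside `ℚ^{l+1}`. -/
def rootSetQ (k l : ℕ) : Set (Fin (l + 1) → ℚ) :=
  (fun (v : Fin (l + 1) → ℤ) (i : Fin (l + 1)) => (v i : ℚ)) '' rootSet k l

lemma sum_ind {l i : ℕ} (hi : i < l + 1) (f : Fin (l + 1) → ℤ) :
    ∑ m : Fin (l + 1), (if (m : ℕ) = i then f m else 0) = f ⟨i, hi⟩ := by
  have h : ∀ m : Fin (l + 1), ((m : ℕ) = i) ↔ (m = ⟨i, hi⟩) := by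
    intro m; constructor
    · intro h; exact Fin.ext h
    · intro h; subst h; rfl
  calc ∑ m : Fin (l + 1), (if (m : ℕ) = i then f m else 0)
      = ∑ m : Fin (l + 1), (if m = ⟨i, hi⟩ then f m else 0) := by
        apply Finset.sum_congr rfl; intro m _; simp [h m]
    _ = f ⟨i, hi⟩ := by rw [Finset.sum_ite_eq']; simp

lemma diff_mem_rootSet (k l : ℕ) (i j : ℕ) (h1i : 1 ≤ i) (hil : i ≤ l)
    (h1j : 1 ≤ j) (hjl : j ≤ l) (hij : i ≠ j) :
    unitVec l i - unitVec l j ∈ rootSet k l := by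
  set v : Fin (l + 1) → ℤ := unitVec l i - unitVec l j with hv
  have hi' : i < l + 1 := by omega
  have hj' : j < l + 1 := by omega
  have hv0 : v 0 = 0 := by
    simp only [hv, Pi.sub_apply, unitVec]
    have : ((0 : Fin (l+1)) : ℕ) = 0 := rfl
    rw [this]
    split_ifs <;> omega
  have hsq : ∀ m : Fin (l + 1), v m * v m =
      (if (m : ℕ) = i then 1 else 0) + (if (m : ℕ) = j then 1 else 0) := by
    intro m
    simp only [hv, Pi.sub_apply, unitVec]
    split_ifs with h1 h2 h2 <;> [omega; ring; ring; ring]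
  have hsum_sq : ∑ m, v m * v m = 2 := by
    rw [Finset.sum_congr rfl (fun m _ => hsq m), Finset.sum_add_distrib,
      sum_ind hi' (fun _ => (1:ℤ)), sum_ind hj' (fun _ => (1:ℤ))]
    norm_num
  have hvm : ∀ m : Fin (l + 1), v m =
      (if (m : ℕ) = i then 1 else 0) - (if (m : ℕ) = j then 1 else 0) := by
    intro m; simp only [hv, Pi.sub_apply, unitVec]
  have hsum : ∑ m, v m = 0 := by
    rw [Finset.sum_congr rfl (fun m _ => hvm m), Finset.sum_sub_distrib,
      sum_ind hi' (fun _ => (1:ℤ)), sum_ind hj' (fun _ => (1:ℤ))]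
    ring
  constructor
  · simp only [bformZ, hv0, hsum_sq]; ring
  · simp only [bformZ, hv0]
    have : ∀ m : Fin (l + 1), v m * omegaZ k l m = (k : ℤ) * v m := by
      intro m
      by_cases hm : m = 0
      · subst hm; simp [hv0]
      · simp [omegaZ, hm, mul_comm]
    rw [Finset.sum_congr rfl (fun m _ => this m), ← Finset.mul_sum, hsum]
    ring

lemma mem_rootSet_iff (k l : ℕ) (hk : 1 ≤ k) (h2 : 2 ≤ l) (hl : l ≤ k + 1)
    (v : Fin (l + 1) → ℤ) :
    v ∈ rootSet k l ↔ ∃ i j : ℕ, 1 ≤ i ∧ i ≤ l ∧ 1 ≤ j ∧ j ≤ l ∧ i ≠ j ∧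
      v = unitVec l i - unitVec l j := by
  constructor
  · rintro ⟨hB, hO⟩
    set a : ℤ := v 0 with ha
    set s : ℤ := ∑ m : Fin l, v m.succ with hs
    set q : ℤ := ∑ m : Fin l, v m.succ * v m.succ with hq
    have hsplit1 : ∑ m : Fin (l+1), v m * v m = a * a + q := Fin.sum_univ_succ _
    have hq' : q = (k : ℤ) * a^2 + 2 := by
      have h := hB
      simp only [bformZ, hsplit1] at h
      nlinarith [h]
    have hs'' : s = -((k:ℤ)+2) * a := by
      have h := hO
      simp only [bformZ] at h
      rw [Fin.sum_univ_succ] at h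
      simp only [omegaZ, Fin.succ_ne_zero, if_neg, if_pos rfl, reduceIte] at h
      rw [← Finset.sum_mul, ← hs] at h
      have hk0 : (k : ℤ) ≠ 0 := by positivity
      have : (k:ℤ) * s = (k:ℤ) * (-((k:ℤ)+2) * a) := by nlinarith [h]
      exact mul_left_cancel₀ hk0 this
    have hcs : s ^ 2 ≤ (l : ℤ) * q := by
      have h := sq_sum_le_card_mul_sum_sq (s := (Finset.univ : Finset (Fin l)))
        (f := fun m => v m.succ)
      have hq2 : ∑ m : Fin l, (v m.succ) ^ 2 = q := by
        rw [hq]; apply Finset.sum_congr rfl; intro m _; ring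
      simpa [hq2, hs] using h
    have ha0 : a = 0 := by
      by_contra h
      have h1 : 1 ≤ a ^ 2 := by
        have h2 := Int.one_le_abs h
        nlinarith [abs_nonneg a, sq_abs a]
      have hlk : (l : ℤ) ≤ (k : ℤ) + 1 := by exact_mod_cast hl
      have hk1 : (1 : ℤ) ≤ (k : ℤ) := by exact_mod_cast hk
      rw [hs'', hq'] at hcs
      have hpos : (0:ℤ) ≤ (k:ℤ)*a^2+2 := by positivity
      have h3 : (l:ℤ)*((k:ℤ)*a^2+2) ≤ ((k:ℤ)+1)*((k:ℤ)*a^2+2) :=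
        mul_le_mul_of_nonneg_right hlk hpos
      have h4 : (3*(k:ℤ)+4)*1 ≤ (3*(k:ℤ)+4)*a^2 :=
        mul_le_mul_of_nonneg_left h1 (by positivity)
      nlinarith [hcs, h3, h4, hk1]
    have hsum0 : ∑ m : Fin (l+1), v m = 0 := by
      rw [Fin.sum_univ_succ, ← ha, ← hs, ha0, hs'', ha0]; ring
    have hsumsq : ∑ m : Fin (l+1), v m * v m = 2 := by
      rw [hsplit1, hq', ha0]; ring
    have hbound : ∀ m : Fin (l+1), v m = -1 ∨ v m = 0 ∨ v m = 1 := by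
      intro m
      have hle : v m * v m ≤ 2 := by
        rw [← hsumsq]
        apply Finset.single_le_sum (f := fun m => v m * v m) _ (Finset.mem_univ m)
        intro i _; exact mul_self_nonneg (v i)
      have hb1 : -1 ≤ v m := by nlinarith [hle]
      have hb2 : v m ≤ 1 := by nlinarith [hle]
      omega
    set t : Finset (Fin (l+1)) := Finset.univ.filter (fun m => v m ≠ 0) with ht
    have hcard : t.card = 2 := by
      have h1 : ∑ m ∈ t, v m * v m = 2 := by
        rw [← hsumsq]
        apply Finset.sum_subset (Finset.subset_univ t)
        intro m _ hm
        simp only [ht, Finset.mem_filter, Finset.mem_univ, true_and, not_not] at hm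
        rw [hm]; ring
      have h2' : ∀ m ∈ t, v m * v m = 1 := by
        intro m hm
        simp only [ht, Finset.mem_filter] at hm
        rcases hbound m with h | h | h <;> simp [h] at hm ⊢
      rw [Finset.sum_congr rfl h2', Finset.sum_const, nsmul_eq_mul, mul_one] at h1
      exact_mod_cast h1
    obtain ⟨p, r, hpr, htpr⟩ := Finset.card_eq_two.mp hcard
    have hvsum : v p + v r = 0 := by
      have h1 : ∑ m ∈ t, v m = 0 := by
        rw [← hsum0]
        apply Finset.sum_subset (Finset.subset_univ t)
        intro m _ hm
        simpa [ht] using hm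
      rw [htpr, Finset.sum_insert (by simp [hpr]), Finset.sum_singleton] at h1
      exact h1
    have hp : v p ≠ 0 := by
      have : p ∈ t := by rw [htpr]; simp
      simpa [ht] using this
    have hr : v r ≠ 0 := by
      have : r ∈ t := by rw [htpr]; simp
      simpa [ht] using this
    have hzero : ∀ m : Fin (l+1), m ≠ p → m ≠ r → v m = 0 := by
      intro m hmp hmr
      by_contra h
      have : m ∈ t := by simp [ht, h]
      rw [htpr] at this
      simp only [Finset.mem_insert, Finset.mem_singleton] at this
      tauto
    have key : ∀ p r : Fin (l+1), p ≠ r → v p = 1 → v r = -1 →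
        (∀ m : Fin (l+1), m ≠ p → m ≠ r → v m = 0) →
        ∃ i j : ℕ, 1 ≤ i ∧ i ≤ l ∧ 1 ≤ j ∧ j ≤ l ∧ i ≠ j ∧
          v = unitVec l i - unitVec l j := by
      intro p r hpr' hvp hvr hz
      have hp0 : p ≠ 0 := by rintro rfl; rw [← ha, ha0] at hvp; omega
      have hr0 : r ≠ 0 := by rintro rfl; rw [← ha, ha0] at hvr; omega
      have hp1 : 1 ≤ (p : ℕ) := by
        rcases Nat.eq_zero_or_pos (p : ℕ) with h | h
        · exact absurd (Fin.ext h) hp0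
        · exact h
      have hr1 : 1 ≤ (r : ℕ) := by
        rcases Nat.eq_zero_or_pos (r : ℕ) with h | h
        · exact absurd (Fin.ext h) hr0
        · exact h
      have hvalne : (p : ℕ) ≠ (r : ℕ) := fun h => hpr' (Fin.ext h)
      refine ⟨(p : ℕ), (r : ℕ), hp1, by omega, hr1, by omega, hvalne, ?_⟩
      funext m
      simp only [Pi.sub_apply, unitVec]
      rcases eq_or_ne m p with rfl | hmp
      · rw [if_pos rfl, if_neg hvalne, hvp]; norm_num
      · rcases eq_or_ne m r with rfl | hmr
        · rw [if_neg (fun h => hvalne h.symm), if_pos rfl, hvr]; norm_num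
        · rw [if_neg (fun h => hmp (Fin.ext h)), if_neg (fun h => hmr (Fin.ext h)),
            hz m hmp hmr]; norm_num
    rcases hbound p with h | h | h
    · have hvr1 : v r = 1 := by rcases hbound r with h' | h' | h' <;> omega
      exact key r p hpr.symm hvr1 h (fun m h1 h2 => hzero m h2 h1)
    · exact absurd h hp
    · have hvr1 : v r = -1 := by rcases hbound r with h' | h' | h' <;> omega
      exact key p r hpr h hvr1 hzero
  · rintro ⟨i, j, h1i, hil, h1j, hjl, hij, rfl⟩
    exact diff_mem_rootSet k l i j h1i hil h1j hjl hij

lemma rootSet_ncard (k l : ℕ) (hk : 1 ≤ k) (h2 : 2 ≤ l) (hl : l ≤ k + 1) :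
    (rootSet k l).ncard = l * (l - 1) := by
  classical
  set f : ℕ × ℕ → (Fin (l + 1) → ℤ) := fun p => unitVec l p.1 - unitVec l p.2 with hf
  set P : Finset (ℕ × ℕ) := (Finset.Icc 1 l).offDiag with hP
  have hset : rootSet k l = ↑(P.image f) := by
    ext v
    rw [mem_rootSet_iff k l hk h2 hl]
    simp only [Finset.coe_image, Set.mem_image, Finset.mem_coe, hP, Finset.mem_offDiag,
      Finset.mem_Icc, hf]
    constructor
    · rintro ⟨i, j, h1, h2', h3, h4, h5, h6⟩
      exact ⟨(i, j), ⟨⟨h1, h2'⟩, ⟨h3, h4⟩, h5⟩, h6.symm⟩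
    · rintro ⟨⟨i, j⟩, ⟨⟨h1, h2'⟩, ⟨h3, h4⟩, h5⟩, h6⟩
      exact ⟨i, j, h1, h2', h3, h4, h5, h6.symm⟩
  have hinj : Set.InjOn f ↑P := by
    rintro ⟨i, j⟩ hij ⟨i', j'⟩ hij' heq
    simp only [hP, Finset.coe_offDiag, Finset.coe_Icc, Set.mem_offDiag, Set.mem_Icc] at hij hij'
    obtain ⟨⟨hi1, hi2⟩, ⟨hj1, hj2⟩, hij0⟩ := hij
    obtain ⟨⟨hi1', hi2'⟩, ⟨hj1', hj2'⟩, hij0'⟩ := hij'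
    have e1 := congrFun heq ⟨i, by omega⟩
    have e2 := congrFun heq ⟨j, by omega⟩
    have e3 := congrFun heq ⟨i', by omega⟩
    simp only [hf, Pi.sub_apply, unitVec] at e1 e2 e3
    simp only [Prod.mk.injEq]
    constructor
    · split_ifs at e1 e3 <;> omega
    · split_ifs at e1 e2 e3 <;> omega
  rw [hset, Set.ncard_coe_finset, Finset.card_image_of_injOn hinj, Finset.offDiag_card,
    Nat.card_Icc]
  have : l + 1 - 1 = l := by omega
  rw [this, Nat.mul_sub, mul_one]

/-- rational unit vector -/
def uQ (l n : ℕ) : Fin (l + 1) → ℚ := fun i => if (i : ℕ) = n then 1 else 0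

lemma cast_diff (l i j : ℕ) :
    (fun (m : Fin (l + 1)) => ((unitVec l i - unitVec l j) m : ℚ)) = uQ l i - uQ l j := by
  funext m
  simp only [Pi.sub_apply, unitVec, uQ]
  push_cast [apply_ite (fun z : ℤ => (z : ℚ))]
  ring

lemma rootSet_finrank (k l : ℕ) (hk : 1 ≤ k) (h2 : 2 ≤ l) (hl : l ≤ k + 1) :
    Module.finrank ℚ ↥(Submodule.span ℚ (rootSetQ k l)) = l - 1 := by
  classical
  set b : Fin (l - 1) → (Fin (l + 1) → ℚ) := fun i => uQ l ((i : ℕ) + 2) - uQ l 1 with hb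
  have hbmem : ∀ i : Fin (l - 1), b i ∈ rootSetQ k l := by
    intro i
    have hi : (i : ℕ) + 2 ≤ l := by have := i.isLt; omega
    refine ⟨unitVec l ((i : ℕ) + 2) - unitVec l 1, ?_, ?_⟩
    · rw [mem_rootSet_iff k l hk h2 hl]
      exact ⟨(i : ℕ) + 2, 1, by omega, hi, le_refl 1, by omega, by omega, rfl⟩
    · exact cast_diff l _ 1
  have hsub : ∀ i : ℕ, 1 ≤ i → i ≤ l →
      uQ l i - uQ l 1 ∈ Submodule.span ℚ (Set.range b) := by
    intro i h1 h2'
    rcases eq_or_lt_of_le h1 with h | h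
    · rw [← h, sub_self]; exact Submodule.zero_mem _
    · have : b ⟨i - 2, by omega⟩ = uQ l i - uQ l 1 := by
        simp only [hb]
        show uQ l (i - 2 + 2) - uQ l 1 = uQ l i - uQ l 1
        rw [show i - 2 + 2 = i by omega]
      rw [← this]
      exact Submodule.subset_span (Set.mem_range_self _)
  have hspan : Submodule.span ℚ (rootSetQ k l) = Submodule.span ℚ (Set.range b) := by
    apply le_antisymm
    · rw [Submodule.span_le]
      rintro x ⟨v, hv, rfl⟩
      rw [mem_rootSet_iff k l hk h2 hl] at hv
      obtain ⟨i, j, h1i, hil, h1j, hjl, hij, rfl⟩ := hv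
      have hcd : (fun (m : Fin (l + 1)) => (((unitVec l i - unitVec l j) m : ℤ) : ℚ)) =
          uQ l i - uQ l j := cast_diff l i j
      show (fun (m : Fin (l + 1)) => (((unitVec l i - unitVec l j) m : ℤ) : ℚ)) ∈ _
      rw [hcd]
      have : uQ l i - uQ l j = (uQ l i - uQ l 1) - (uQ l j - uQ l 1) := by ring
      rw [this]
      exact Submodule.sub_mem _ (hsub i h1i hil) (hsub j h1j hjl)
    · rw [Submodule.span_le]
      rintro x ⟨i, rfl⟩
      exact Submodule.subset_span (hbmem i)
  have hli : LinearIndependent ℚ b := by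
    rw [Fintype.linearIndependent_iff]
    intro g hg i
    have hm : (i : ℕ) + 2 < l + 1 := by have := i.isLt; omega
    have h := congrFun hg ⟨(i : ℕ) + 2, hm⟩
    rw [Finset.sum_apply] at h
    have hterm : ∀ j : Fin (l - 1),
        (g j • b j) (⟨(i : ℕ) + 2, hm⟩ : Fin (l + 1)) = if j = i then g j else 0 := by
      intro j
      simp only [hb, Pi.smul_apply, Pi.sub_apply, uQ, smul_eq_mul]
      by_cases hji : j = i
      · subst hji; simp
      · have : ¬((i : ℕ) + 2 = (j : ℕ) + 2) := by
          intro hc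
          exact hji (Fin.ext (by omega)).symm
        rw [if_neg this, if_neg (by omega), if_neg hji]
        ring
    simp only [hterm, Finset.sum_ite_eq', Finset.mem_univ, if_true] at h
    simpa using h
  rw [hspan, finrank_span_eq_card hli, Fintype.card_fin]

/-- For `2 ≤ l ≤ k+1`, `R^l_k` consists exactly of the vectors `eᵢ - eⱼ` for
`1 ≤ i, j ≤ l`, `i ≠ j`; it has exactly `l(l-1)` elements (a root system of type
`A_{l-1}`), and its `ℚ`-linear span has dimension `l - 1`. -/
theorem rootSet_eq_A_type (k l : ℕ) (hk : 1 ≤ k) (h2 : 2 ≤ l) (hl : l ≤ k + 1) :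
    rootSet k l = {v | ∃ i j : ℕ, 1 ≤ i ∧ i ≤ l ∧ 1 ≤ j ∧ j ≤ l ∧ i ≠ j ∧
        v = unitVec l i - unitVec l j} ∧
      (rootSet k l).ncard = l * (l - 1) ∧
      Module.finrank ℚ ↥(Submodule.span ℚ (rootSetQ k l)) = l - 1 := by
  refine ⟨?_, rootSet_ncard k l hk h2 hl, rootSet_finrank k l hk h2 hl⟩
  ext v
  exact mem_rootSet_iff k l hk h2 hl v
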